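/- Let X ∈ {0,1}^d with exactly s nonzeros where d/4 ≤ s < d/2, and H the Householder reflection with normal v = (1/√d,…,1/√d). Then the regularity constant of HX equals c' = 4s/d < d/s. -/

import Mathlib

/-- Regularity constant `c(Y) = d‖Y²‖_∞ / ‖Y‖₂²` of a vector `Y ∈ ℝ^d`. -/
noncomputable def regConst (d : ℕ) (Y : Fin d → ℝ) : ℝ :=
  (d : ℝ) * (⨆ i, (Y i) ^ 2) / ∑ i, (Y i) ^ 2

/-!
Since `⟨v, X⟩ v = (s/d) 𝟙`, the reflection acts as `HX = X - c 𝟙` with `c = 2s/d ∈ [1/2, 1)`.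
The entries of `HX` are therefore `1 - c` and `-c`, and `(1 - c)² ≤ c²`; as `s < d` some entry
equals `-c`, so `‖(HX)²‖_∞ = c²`. Expanding gives `‖HX‖₂² = s - 2cs + dc² = s`, whence
`c(HX) = d c² / s = 4s/d`, and `4s/d < d/s` is `2s < d`.
-/

open Finset Matrix

theorem Matrix.one_sub_smul_vecMulVec_mulVec {ι R : Type*} [Fintype ι] [DecidableEq ι]
    [CommRing R] (a : R) (v x : ι → R) :
    (1 - a • vecMulVec v v) *ᵥ x = x - (a * (v ⬝ᵥ x)) • v := by
  rw [sub_mulVec, one_mulVec, smul_mulVec, vecMulVec_mulVec, op_smul_eq_smul, smul_smul]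

section Binary

variable {ι : Type*} [Fintype ι] {X : ι → ℝ}

theorem sum_eq_card_filter_of_binary (hX : ∀ i, X i = 0 ∨ X i = 1) :
    ∑ i, X i = #{i | X i = 1} := by
  rw [← sum_boole]
  exact sum_congr rfl fun i _ => by rcases hX i with h | h <;> simp [h]

theorem sum_sq_eq_sum_of_binary (hX : ∀ i, X i = 0 ∨ X i = 1) :
    ∑ i, X i ^ 2 = ∑ i, X i :=
  sum_congr rfl fun i _ => by rcases hX i with h | h <;> simp [h]

theorem iSup_sq_sub_of_binary [Nonempty ι] {c : ℝ} (hX : ∀ i, X i = 0 ∨ X i = 1)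
    (hzero : ∃ i, X i = 0) (hc : 1 / 2 ≤ c) : ⨆ i, (X i - c) ^ 2 = c ^ 2 := by
  obtain ⟨i₀, hi₀⟩ := hzero
  refine le_antisymm (ciSup_le fun i => ?_) ?_
  · rcases hX i with h | h <;> rw [h] <;> nlinarith
  · have := le_ciSup (Finite.bddAbove_range fun i => (X i - c) ^ 2) i₀
    rwa [hi₀, zero_sub, neg_sq] at this

end Binary

theorem sum_sq_sub_const {ι : Type*} [Fintype ι] (X : ι → ℝ) (c : ℝ) :
    ∑ i, (X i - c) ^ 2 = ∑ i, X i ^ 2 - 2 * c * ∑ i, X i + Fintype.card ι * c ^ 2 := by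
  simp only [sub_sq, sum_add_distrib, sum_sub_distrib, sum_const, card_univ, nsmul_eq_mul,
    ← sum_mul, ← mul_sum]
  ring

theorem householder_uniform_mulVec_apply (d : ℕ) (X : Fin d → ℝ) (i : Fin d) :
    ((1 - (2 : ℝ) • vecMulVec (fun _ => 1 / √d) (fun _ => 1 / √d)) *ᵥ X) i
      = X i - 2 * (∑ j, X j) / d := by
  rw [one_sub_smul_vecMulVec_mulVec]
  simp only [Pi.sub_apply, Pi.smul_apply, smul_eq_mul, dotProduct, ← mul_sum]
  rcases Nat.eq_zero_or_pos d with rfl | hd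
  · simp
  · field_simp
    rw [Real.sq_sqrt (Nat.cast_nonneg d)]
    ring

theorem householder_regConst_moderate_sparse_general (d s : ℕ)
    (hlow : (d : ℝ) / 4 ≤ (s : ℝ)) (hhigh : (s : ℝ) < (d : ℝ) / 2)
    (X : Fin d → ℝ) (hX : ∀ i, X i = 0 ∨ X i = 1)
    (hs : (Finset.univ.filter fun i => X i = 1).card = s) :
    let v : Fin d → ℝ := fun _ => 1 / Real.sqrt d
    let H : Matrix (Fin d) (Fin d) ℝ := 1 - (2 : ℝ) • Matrix.vecMulVec v v
    regConst d (H.mulVec X) = 4 * s / d ∧ 4 * (s : ℝ) / d < (d : ℝ) / s := by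
  intro v H
  have hd : (0 : ℝ) < d := by linarith
  have hs0 : (0 : ℝ) < s := by linarith
  have hsum : ∑ i, X i = s := by rw [sum_eq_card_filter_of_binary hX, hs]
  have hHX : H *ᵥ X = fun i => X i - 2 * s / d := by
    ext i; rw [householder_uniform_mulVec_apply, hsum]
  have hzero : ∃ i, X i = 0 := by
    by_contra! h
    rw [filter_true_of_mem fun i _ => (hX i).resolve_left (h i), card_univ,
      Fintype.card_fin] at hs
    subst hs
    linarith
  have : Nonempty (Fin d) := ⟨hzero.choose⟩
  have hsup : ⨆ i, (X i - 2 * s / d) ^ 2 = (2 * s / d : ℝ) ^ 2 :=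
    iSup_sq_sub_of_binary hX hzero (by rw [le_div_iff₀ hd]; linarith)
  have hnorm : ∑ i, (X i - 2 * s / d) ^ 2 = (s : ℝ) := by
    rw [sum_sq_sub_const, sum_sq_eq_sum_of_binary hX, hsum, Fintype.card_fin]
    field_simp
    ring
  refine ⟨?_, ?_⟩
  · rw [regConst, hHX, hsup, hnorm]
    field_simp
    ring
  · rw [div_lt_div_iff₀ hd hs0]
    nlinarith

/-- If `X ∈ {0,1}^d` has exactly `s` nonzeros with `d/4 ≤ s < d/2`, then the
regularity constant of the Householder-transformed vector is `4s/d < d/s`. -/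
theorem householder_regConst_moderate_sparse (d s : ℕ) (hd : 0 < d) (hs1 : 1 ≤ s)
    (hlow : (d : ℝ) / 4 ≤ (s : ℝ)) (hhigh : (s : ℝ) < (d : ℝ) / 2)
    (X : Fin d → ℝ) (hX : ∀ i, X i = 0 ∨ X i = 1)
    (hs : (Finset.univ.filter fun i => X i = 1).card = s) :
    let v : Fin d → ℝ := fun _ => 1 / Real.sqrt d
    let H : Matrix (Fin d) (Fin d) ℝ := 1 - (2 : ℝ) • Matrix.vecMulVec v v
    regConst d (H.mulVec X) = 4 * s / d ∧ 4 * (s : ℝ) / d < (d : ℝ) / s :=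
  householder_regConst_moderate_sparse_general d s hlow hhigh X hX hs
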